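/- Let h be a continuous real-valued function on the set of pure states of a finite-dimensional Hilbert space ℋ⊗ℋ with dim ℋ = d, and let ρ be any density operator on ℋ⊗ℋ. Then the infimum over finite pure-state decompositions ρ = ∑ᵢ pᵢ|ψᵢ⟩⟨ψᵢ| of ∑ᵢ pᵢ h(|ψᵢ⟩⟨ψᵢ|) is attained, and the optimal ensemble can be chosen to have at most d⁴ + 1 elements. -/

import Mathlib

open scoped Matrix Kronecker ComplexOrder

noncomputable section

namespace QEMD

variable {m n : Type*} [Fintype m] [Fintype n] [DecidableEq m] [DecidableEq n]

/-- Total square root: the PSD square root if `A` is PSD, else `0`. -/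
def msqrt (A : Matrix n n ℂ) : Matrix n n ℂ :=
  letI := Classical.dec A.PosSemidef
  if h : A.PosSemidef then
    (h.1.eigenvectorUnitary : Matrix n n ℂ) *
      Matrix.diagonal ((↑) ∘ (Real.sqrt ∘ h.1.eigenvalues)) *
      (star (h.1.eigenvectorUnitary : Matrix n n ℂ)) else 0

/-- Trace norm `‖A‖₁ = Tr √(AᴴA)`. -/
def traceNorm (A : Matrix n n ℂ) : ℝ :=
  ((msqrt (Aᴴ * A)).trace).re

/-- Trace distance `D(ρ,σ) = ½‖ρ-σ‖₁`. -/
def traceDist (ρ σ : Matrix n n ℂ) : ℝ := traceNorm (ρ - σ) / 2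

/-- Fidelity `F(ρ,σ) = Tr √(√ρ σ √ρ)`. -/
def fidelity (ρ σ : Matrix n n ℂ) : ℝ :=
  ((msqrt (msqrt ρ * σ * msqrt ρ)).trace).re

/-- Density matrix predicate. -/
def IsDensity (ρ : Matrix n n ℂ) : Prop := ρ.PosSemidef ∧ ρ.trace = 1

/-- Projector `|v⟩⟨v|` onto a vector. -/
def proj (v : n → ℂ) : Matrix n n ℂ := Matrix.of fun i j => v i * star (v j)

/-- Partial trace over the first (left) factor. -/
def traceLeft (ρ : Matrix (m × n) (m × n) ℂ) : Matrix n n ℂ :=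
  Matrix.of fun i j => ∑ k, ρ (k, i) (k, j)

/-- Partial trace over the second (right) factor. -/
def traceRight (ρ : Matrix (m × n) (m × n) ℂ) : Matrix m m ℂ :=
  Matrix.of fun i j => ∑ k, ρ (i, k) (j, k)

/-- The swap operator `S|αβ⟩ = |βα⟩` on `ℂ^d ⊗ ℂ^d`. -/
def swap (d : ℕ) : Matrix (Fin d × Fin d) (Fin d × Fin d) ℂ :=
  Matrix.of fun p q => if p.1 = q.2 ∧ p.2 = q.1 then 1 else 0

/-- Projection onto the symmetric subspace, `P_s = (I + S)/2`. -/
def Psym (d : ℕ) : Matrix (Fin d × Fin d) (Fin d × Fin d) ℂ := (2:ℂ)⁻¹ • (1 + swap d)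

/-- Projection onto the antisymmetric subspace, `P_as = (I - S)/2`. -/
def Pasym (d : ℕ) : Matrix (Fin d × Fin d) (Fin d × Fin d) ℂ := (2:ℂ)⁻¹ • (1 - swap d)

/-- `ρAB` is a quantum coupling of `ρA` and `ρB`. -/
def IsCoupling (ρAB : Matrix (m × n) (m × n) ℂ) (ρA : Matrix m m ℂ)
    (ρB : Matrix n n ℂ) : Prop :=
  IsDensity ρAB ∧ traceRight ρAB = ρA ∧ traceLeft ρAB = ρB

/-- The maximally entangled vector `|Φ⟩ = (1/√d) ∑ᵢ |i⟩|i⟩`. -/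
def maxEnt (d : ℕ) : Fin d × Fin d → ℂ :=
  fun p => if p.1 = p.2 then ((1 / Real.sqrt d : ℝ) : ℂ) else 0

/-! Attach to each pure state `P` the point `(P, h P)` of the real affine space of pairs
(Hermitian matrix of trace one, real number), which has dimension `d⁴`. For a decomposition
`ρ = ∑ pᵢ Pᵢ`, the point `(ρ, ∑ pᵢ h Pᵢ)` is a convex combination of such points, so by
Carathéodory's theorem the same average is realised by a decomposition with at most `d⁴ + 1`
terms. The infimum may therefore be taken over decompositions of length exactly `d⁴ + 1` whose
weights are allowed to vanish. These form a compact set on which the average is continuous, so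
the minimum is attained, and discarding the zero weights yields an optimal ensemble. -/

section Proj

variable {ι : Type*}

lemma isHermitian_proj (ψ : ι → ℂ) : (proj ψ).IsHermitian := by
  ext i j
  simp [proj, mul_comm]

lemma trace_proj [Fintype ι] (ψ : ι → ℂ) : (proj ψ).trace = ((∑ q, ‖ψ q‖ ^ 2 : ℝ) : ℂ) := by
  simp [Matrix.trace, proj, Complex.mul_conj']

lemma continuous_proj : Continuous fun ψ : ι → ℂ => proj ψ := by
  unfold proj
  fun_prop

end Proj

section PureDecomposition

variable {ι κ κ' : Type*} [Fintype κ] [Fintype κ']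

def ensembleAvg (h : Matrix ι ι ℂ → ℝ) (p : κ → ℝ) (ψ : κ → ι → ℂ) : ℝ :=
  ∑ i, p i * h (proj (ψ i))

lemma ensembleAvg_comp {h : Matrix ι ι ℂ → ℝ} {p : κ → ℝ} {ψ : κ → ι → ℂ} {e : κ' → κ}
    (he : Function.Injective e) (hp : ∀ i ∉ Set.range e, p i = 0) :
    ensembleAvg h (p ∘ e) (ψ ∘ e) = ensembleAvg h p ψ :=
  Fintype.sum_of_injective e he _ _ (fun i hi => by simp [hp i hi]) fun _ => rfl

lemma sum_smul_proj_prod {h : Matrix ι ι ℂ → ℝ} (p : κ → ℝ) (ψ : κ → ι → ℂ) :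
    ∑ i, p i • (proj (ψ i), h (proj (ψ i))) =
      (∑ i, (p i : ℂ) • proj (ψ i), ensembleAvg h p ψ) := by
  ext <;> simp [Prod.fst_sum, Prod.snd_sum, ensembleAvg, Complex.coe_smul]

variable [Fintype ι]

/-- `ρ = ∑ i, p i |ψ i⟩⟨ψ i|` with unit vectors `ψ i`. Weights are only required to be
nonnegative, so that the decompositions of a fixed length form a compact set. -/
structure IsPureDecomp (ρ : Matrix ι ι ℂ) (p : κ → ℝ) (ψ : κ → ι → ℂ) : Prop where
  nonneg : ∀ i, 0 ≤ p i
  sum_eq_one : ∑ i, p i = 1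
  sum_norm_sq_eq_one : ∀ i, ∑ q, ‖ψ i q‖ ^ 2 = 1
  eq_sum : ρ = ∑ i, (p i : ℂ) • proj (ψ i)

lemma isPureDecomp_iff {ρ : Matrix ι ι ℂ} {p : κ → ℝ} {ψ : κ → ι → ℂ} :
    IsPureDecomp ρ p ψ ↔ (∀ i, 0 ≤ p i) ∧ ∑ i, p i = 1 ∧ (∀ i, ∑ q, ‖ψ i q‖ ^ 2 = 1) ∧
      ρ = ∑ i, (p i : ℂ) • proj (ψ i) :=
  ⟨fun ⟨h₁, h₂, h₃, h₄⟩ => ⟨h₁, h₂, h₃, h₄⟩, fun ⟨h₁, h₂, h₃, h₄⟩ => ⟨h₁, h₂, h₃, h₄⟩⟩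

def pureStates (ι : Type*) [Fintype ι] : Set (Matrix ι ι ℂ) :=
  {A | ∃ ψ : ι → ℂ, (∑ q, ‖ψ q‖ ^ 2 = 1) ∧ A = proj ψ}

def pureDecompAvgs (h : Matrix ι ι ℂ → ℝ) (ρ : Matrix ι ι ℂ) : Set ℝ :=
  {x | ∃ (n : ℕ) (p : Fin n → ℝ) (ψ : Fin n → ι → ℂ),
    (∀ i, 0 < p i) ∧ (∑ i, p i = 1) ∧ (∀ i, ∑ q, ‖ψ i q‖ ^ 2 = 1) ∧
      ρ = ∑ i, (p i : ℂ) • proj (ψ i) ∧ x = ∑ i, p i * h (proj (ψ i))}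

variable {ρ : Matrix ι ι ℂ} {h : Matrix ι ι ℂ → ℝ} {p : κ → ℝ} {ψ : κ → ι → ℂ}

lemma ensembleAvg_mem_pureDecompAvgs {n : ℕ} {p : Fin n → ℝ} {ψ : Fin n → ι → ℂ}
    (hpos : ∀ i, 0 < p i) (hdec : IsPureDecomp ρ p ψ) :
    ensembleAvg h p ψ ∈ pureDecompAvgs h ρ :=
  ⟨n, p, ψ, hpos, hdec.sum_eq_one, hdec.sum_norm_sq_eq_one, hdec.eq_sum, rfl⟩

lemma exists_isPureDecomp_of_mem_pureDecompAvgs {x : ℝ} (hx : x ∈ pureDecompAvgs h ρ) :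
    ∃ (n : ℕ) (p : Fin n → ℝ) (ψ : Fin n → ι → ℂ),
      IsPureDecomp ρ p ψ ∧ ensembleAvg h p ψ = x := by
  obtain ⟨n, p, ψ, hpos, hsum, hunit, hρ, rfl⟩ := hx
  exact ⟨n, p, ψ, ⟨fun i => (hpos i).le, hsum, hunit, hρ⟩, rfl⟩

lemma isPureDecomp_comp_iff {e : κ' → κ} (he : Function.Injective e)
    (hp : ∀ i ∉ Set.range e, p i = 0) (hψ : ∀ i, ∑ q, ‖ψ i q‖ ^ 2 = 1) :
    IsPureDecomp ρ (p ∘ e) (ψ ∘ e) ↔ IsPureDecomp ρ p ψ := by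
  have hsum : ∑ j, p (e j) = ∑ i, p i := Fintype.sum_of_injective e he _ _ hp fun _ => rfl
  have hmat : ∑ j, (p (e j) : ℂ) • proj (ψ (e j)) = ∑ i, (p i : ℂ) • proj (ψ i) :=
    Fintype.sum_of_injective e he _ _ (fun i hi => by simp [hp i hi]) fun _ => rfl
  refine ⟨fun ⟨hnonneg, hsum1, _, hρ⟩ => ⟨fun i => ?_, hsum ▸ hsum1, hψ, hmat ▸ hρ⟩,
    fun ⟨hnonneg, hsum1, hunit, hρ⟩ => ⟨fun j => hnonneg _, hsum.trans hsum1, fun j => hunit _,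
      hρ.trans hmat.symm⟩⟩
  by_cases hi : i ∈ Set.range e
  · obtain ⟨j, rfl⟩ := hi
    exact hnonneg j
  · exact (hp i hi).ge

lemma IsPureDecomp.exists_pos (h : Matrix ι ι ℂ → ℝ) (hdec : IsPureDecomp ρ p ψ) :
    ∃ (n : ℕ) (p' : Fin n → ℝ) (ψ' : Fin n → ι → ℂ), n ≤ Fintype.card κ ∧ (∀ i, 0 < p' i) ∧
      IsPureDecomp ρ p' ψ' ∧ ensembleAvg h p' ψ' = ensembleAvg h p ψ := by
  classical
  let e : Fin (Fintype.card {i // p i ≠ 0}) → κ := Subtype.val ∘ (Fintype.equivFin _).symm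
  have he : Function.Injective e := Subtype.val_injective.comp (Equiv.injective _)
  have hp : ∀ i ∉ Set.range e, p i = 0 := by
    intro i hi
    by_contra hpi
    exact hi ⟨Fintype.equivFin _ ⟨i, hpi⟩, by simp [e]⟩
  exact ⟨_, p ∘ e, ψ ∘ e, Fintype.card_subtype_le _,
    fun j => (hdec.nonneg _).lt_of_ne' ((Fintype.equivFin _).symm j).2,
    (isPureDecomp_comp_iff he hp hdec.sum_norm_sq_eq_one).2 hdec, ensembleAvg_comp he hp⟩

lemma IsPureDecomp.exists_fin_of_card_le (h : Matrix ι ι ℂ → ℝ) (hdec : IsPureDecomp ρ p ψ)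
    {N : ℕ} (hN : Fintype.card κ ≤ N) :
    ∃ (p' : Fin N → ℝ) (ψ' : Fin N → ι → ℂ),
      IsPureDecomp ρ p' ψ' ∧ ensembleAvg h p' ψ' = ensembleAvg h p ψ := by
  obtain ⟨e⟩ := Function.Embedding.nonempty_of_card_le (hN.trans (Fintype.card_fin N).ge)
  obtain ⟨i₀, -⟩ := Finset.nonempty_of_sum_ne_zero (hdec.sum_eq_one.symm ▸ one_ne_zero)
  let p' := Function.extend e p 0
  let ψ' := Function.extend e ψ fun _ => ψ i₀
  have hp' : ∀ j ∉ Set.range e, p' j = 0 := fun j hj =>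
    Function.extend_apply' _ _ _ (by simpa using hj)
  have hψ' : ∀ j, ∑ q, ‖ψ' j q‖ ^ 2 = 1 := by
    intro j
    simp only [ψ', Function.extend_def]
    split_ifs
    exacts [hdec.sum_norm_sq_eq_one _, hdec.sum_norm_sq_eq_one i₀]
  have hcomp : p' ∘ e = p ∧ ψ' ∘ e = ψ :=
    ⟨Function.extend_comp e.injective _ _, Function.extend_comp e.injective _ _⟩
  refine ⟨p', ψ', (isPureDecomp_comp_iff e.injective hp' hψ').1 ?_, ?_⟩
  · rwa [hcomp.1, hcomp.2]
  · rw [← ensembleAvg_comp e.injective hp', hcomp.1, hcomp.2]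

end PureDecomposition

section Dimension

variable {ι : Type*} [Fintype ι]

def hermitianTraceZeroProd (ι : Type*) [Fintype ι] : Submodule ℝ (Matrix ι ι ℂ × ℝ) where
  carrier := {x | x.1.IsHermitian ∧ x.1.trace = 0}
  add_mem' := fun ⟨ha, ha'⟩ ⟨hb, hb'⟩ => ⟨ha.add hb, by simp [ha', hb']⟩
  zero_mem' := ⟨Matrix.isHermitian_zero, by simp⟩
  smul_mem' := fun c x ⟨hx, hx'⟩ => ⟨hx.smul (IsSelfAdjoint.all c), by simp [hx']⟩

lemma finrank_hermitianTraceZeroProd_le [Nonempty ι] :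
    Module.finrank ℝ (hermitianTraceZeroProd ι) ≤ Fintype.card ι ^ 2 := by
  classical
  let i₀ : ι := Classical.arbitrary ι
  -- A Hermitian `A` is determined by the numbers `re (A q) + im (A q)`, and its entry at
  -- `(i₀, i₀)` by the others and the trace, so that slot is free for the real coordinate.
  let Φ : (Matrix ι ι ℂ × ℝ) →ₗ[ℝ] (ι × ι → ℝ) :=
    { toFun := fun x q => if q = (i₀, i₀) then x.2 else (x.1 q.1 q.2).re + (x.1 q.1 q.2).im
      map_add' := by
        intro x y
        ext q
        split_ifs
        · simp [*]
        · simp [*, add_add_add_comm]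
      map_smul' := by
        intro c x
        ext q
        split_ifs
        · simp [*]
        · simp [*, mul_add] }
  have hinj : Function.Injective (Φ.domRestrict (hermitianTraceZeroProd ι)) := by
    rw [← LinearMap.ker_eq_bot, LinearMap.ker_eq_bot']
    rintro ⟨⟨A, r⟩, hA, htr⟩ hΦ
    dsimp only at hA htr
    have hΦ' : ∀ i j, (if (i, j) = (i₀, i₀) then r else (A i j).re + (A i j).im) = 0 :=
      fun i j => congrFun hΦ (i, j)
    have hoff : ∀ i j, (i, j) ≠ (i₀, i₀) → A i j = 0 := by
      intro i j hij
      have hji : (j, i) ≠ (i₀, i₀) := fun h => hij (by simp_all)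
      have h₁ := hΦ' i j
      have h₂ := hΦ' j i
      rw [if_neg hij] at h₁
      rw [if_neg hji, ← hA.apply j i, Complex.star_def, Complex.conj_re, Complex.conj_im] at h₂
      exact Complex.ext (by simp only [Complex.zero_re]; linarith)
        (by simp only [Complex.zero_im]; linarith)
    have hdiag : A i₀ i₀ = 0 := by
      rwa [Matrix.trace,
        Fintype.sum_eq_single (f := A.diag) i₀ fun i hi => hoff i i (by simp [hi])] at htr
    have hr : r = 0 := by simpa using hΦ' i₀ i₀
    ext i j
    · by_cases hij : (i, j) = (i₀, i₀)
      · simp only [Prod.mk.injEq] at hij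
        simp [hij.1, hij.2, hdiag]
      · simp [hoff i j hij]
    · exact hr
  calc Module.finrank ℝ (hermitianTraceZeroProd ι)
      ≤ Module.finrank ℝ (ι × ι → ℝ) := LinearMap.finrank_le_finrank_of_injective hinj
    _ = Fintype.card ι ^ 2 := by simp [sq]

lemma card_le_of_affineIndependent {κ : Type*} [Fintype κ] {z : κ → Matrix ι ι ℂ × ℝ}
    (hai : AffineIndependent ℝ z) (hz : ∀ i, (z i).1.IsHermitian ∧ (z i).1.trace = 1) :
    Fintype.card κ ≤ Fintype.card ι ^ 2 + 1 := by
  obtain hκ | ⟨⟨k⟩⟩ := isEmpty_or_nonempty κ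
  · simp
  have : Nonempty ι := by
    by_contra hι
    rw [not_nonempty_iff] at hι
    simpa [Matrix.trace] using (hz k).2
  have hle : vectorSpan ℝ (Set.range z) ≤ hermitianTraceZeroProd ι := by
    rw [vectorSpan_def, Submodule.span_le]
    rintro _ ⟨_, ⟨i, rfl⟩, _, ⟨j, rfl⟩, rfl⟩
    exact ⟨(hz i).1.sub (hz j).1, by simp [(hz i).2, (hz j).2]⟩
  calc Fintype.card κ ≤ Module.finrank ℝ (vectorSpan ℝ (Set.range z)) + 1 :=
        hai.card_le_finrank_succ
    _ ≤ Module.finrank ℝ (hermitianTraceZeroProd ι) + 1 := by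
        gcongr
        exact Submodule.finrank_mono hle
    _ ≤ Fintype.card ι ^ 2 + 1 := by
        gcongr
        exact finrank_hermitianTraceZeroProd_le

end Dimension

section Attainment

variable {ι κ : Type*} [Fintype ι] [Fintype κ] {ρ : Matrix ι ι ℂ} {h : Matrix ι ι ℂ → ℝ}

lemma IsDensity.exists_isPureDecomp (hρ : IsDensity ρ) :
    ∃ (p : ι → ℝ) (ψ : ι → ι → ℂ), IsPureDecomp ρ p ψ := by
  classical
  obtain ⟨hpsd, htr⟩ := hρ
  let v := hpsd.1.eigenvectorBasis
  refine ⟨hpsd.1.eigenvalues, fun k => v k, hpsd.eigenvalues_nonneg, ?_, fun k => ?_, ?_⟩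
  · have htr' := hpsd.1.trace_eq_sum_eigenvalues
    rw [htr] at htr'
    exact Complex.ofReal_injective (by push_cast; exact htr'.symm)
  · rw [← EuclideanSpace.norm_sq_eq, v.orthonormal.1 k, one_pow]
  · conv_lhs => rw [hpsd.1.spectral_theorem]
    ext i j
    simp [Unitary.conjStarAlgAut_apply, Matrix.mul_apply, proj, Matrix.sum_apply, v,
      Matrix.diagonal, mul_comm, mul_left_comm, mul_assoc]

lemma IsPureDecomp.exists_fin_card_sq_add_one (h : Matrix ι ι ℂ → ℝ) {p : κ → ℝ}
    {ψ : κ → ι → ℂ} (hdec : IsPureDecomp ρ p ψ) :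
    ∃ (p' : Fin (Fintype.card ι ^ 2 + 1) → ℝ) (ψ' : Fin (Fintype.card ι ^ 2 + 1) → ι → ℂ),
      IsPureDecomp ρ p' ψ' ∧ ensembleAvg h p' ψ' = ensembleAvg h p ψ := by
  let graph : Set (Matrix ι ι ℂ × ℝ) :=
    {y | ∃ φ : ι → ℂ, (∑ q, ‖φ q‖ ^ 2 = 1) ∧ y = (proj φ, h (proj φ))}
  have hmem : (ρ, ensembleAvg h p ψ) ∈ convexHull ℝ graph := by
    rw [hdec.eq_sum, ← sum_smul_proj_prod]
    exact (convex_convexHull ℝ _).sum_mem (fun i _ => hdec.nonneg i) hdec.sum_eq_one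
      fun i _ => subset_convexHull ℝ _ ⟨ψ i, hdec.sum_norm_sq_eq_one i, rfl⟩
  obtain ⟨κ', _, z, w, hzgraph, hai, hw, hw1, hwz⟩ := eq_pos_convex_span_of_mem_convexHull hmem
  choose ψ' hψ' hzψ' using fun i => hzgraph (Set.mem_range_self i)
  have hcard : Fintype.card κ' ≤ Fintype.card ι ^ 2 + 1 :=
    card_le_of_affineIndependent hai fun i => by
      rw [hzψ' i, trace_proj, hψ' i]
      exact ⟨isHermitian_proj _, Complex.ofReal_one⟩
  rw [funext hzψ', sum_smul_proj_prod, Prod.mk.injEq] at hwz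
  obtain ⟨p'', ψ'', hdec'', havg⟩ :=
    IsPureDecomp.exists_fin_of_card_le h ⟨fun i => (hw i).le, hw1, hψ', hwz.1.symm⟩ hcard
  exact ⟨p'', ψ'', hdec'', havg.trans hwz.2⟩

lemma isCompact_setOf_isPureDecomp (ρ : Matrix ι ι ℂ) :
    IsCompact {z : (κ → ℝ) × (κ → ι → ℂ) | IsPureDecomp ρ z.1 z.2} := by
  have hc₁ : ∀ i, Continuous fun z : (κ → ℝ) × (κ → ι → ℂ) => z.1 i :=
    fun i => (continuous_apply i).comp continuous_fst
  have hc₂ : ∀ i, Continuous fun z : (κ → ℝ) × (κ → ι → ℂ) => z.2 i :=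
    fun i => (continuous_apply i).comp continuous_snd
  refine Metric.isCompact_of_isClosed_isBounded ?_ ?_
  · simp only [isPureDecomp_iff, Set.ofPred_and, Set.ofPred_forall]
    refine (isClosed_iInter fun i => isClosed_le continuous_const (hc₁ i)).inter <|
      (isClosed_eq (continuous_finsetSum _ fun i _ => hc₁ i) continuous_const).inter <|
      (isClosed_iInter fun i => isClosed_eq (continuous_finsetSum _ fun q _ =>
        ((continuous_apply q).comp (hc₂ i)).norm.pow 2) continuous_const).inter <|
      isClosed_eq continuous_const (continuous_finsetSum _ fun i _ =>
        (Complex.continuous_ofReal.comp (hc₁ i)).smul (continuous_proj.comp (hc₂ i)))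
  · refine isBounded_iff_forall_norm_le.2 ⟨1, fun z ⟨hnonneg, hsum, hunit, _⟩ => ?_⟩
    refine norm_prod_le_iff.2 ⟨(pi_norm_le_iff_of_nonneg zero_le_one).2 fun i => ?_,
      (pi_norm_le_iff_of_nonneg zero_le_one).2 fun i =>
        (pi_norm_le_iff_of_nonneg zero_le_one).2 fun q => ?_⟩
    · rw [Real.norm_of_nonneg (hnonneg i), ← hsum]
      exact Finset.single_le_sum (fun j _ => hnonneg j) (Finset.mem_univ i)
    · rw [← sq_le_one_iff₀ (norm_nonneg _), ← hunit i]
      exact Finset.single_le_sum (f := fun q => ‖z.2 i q‖ ^ 2) (fun _ _ => sq_nonneg _)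
        (Finset.mem_univ q)

lemma continuousOn_ensembleAvg (hcont : ContinuousOn h (pureStates ι)) :
    ContinuousOn (fun z : (κ → ℝ) × (κ → ι → ℂ) => ensembleAvg h z.1 z.2)
      {z | ∀ i, ∑ q, ‖z.2 i q‖ ^ 2 = 1} :=
  continuousOn_finsetSum _ fun i _ =>
    ((continuous_apply i).comp continuous_fst).continuousOn.mul <|
      hcont.comp (continuous_proj.comp ((continuous_apply i).comp continuous_snd)).continuousOn
        fun z hz => ⟨z.2 i, hz i, rfl⟩

theorem exists_isLeast_pureDecompAvgs (hcont : ContinuousOn h (pureStates ι))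
    (hρ : IsDensity ρ) :
    ∃ (n : ℕ) (p : Fin n → ℝ) (ψ : Fin n → ι → ℂ), n ≤ Fintype.card ι ^ 2 + 1 ∧
      (∀ i, 0 < p i) ∧ IsPureDecomp ρ p ψ ∧ IsLeast (pureDecompAvgs h ρ) (ensembleAvg h p ψ) := by
  let K := {z : (Fin (Fintype.card ι ^ 2 + 1) → ℝ) × (Fin (Fintype.card ι ^ 2 + 1) → ι → ℂ) |
    IsPureDecomp ρ z.1 z.2}
  have hK : ∀ x ∈ pureDecompAvgs h ρ, ∃ z ∈ K, ensembleAvg h z.1 z.2 = x := by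
    intro x hx
    obtain ⟨n, p, ψ, hdec, rfl⟩ := exists_isPureDecomp_of_mem_pureDecompAvgs hx
    obtain ⟨p', ψ', hdec', havg⟩ := hdec.exists_fin_card_sq_add_one h
    exact ⟨(p', ψ'), hdec', havg⟩
  have hKne : K.Nonempty := by
    obtain ⟨p, ψ, hdec⟩ := hρ.exists_isPureDecomp
    obtain ⟨p', ψ', hdec', -⟩ := hdec.exists_fin_card_sq_add_one h
    exact ⟨(p', ψ'), hdec'⟩
  obtain ⟨z, hzK, hmin⟩ := (isCompact_setOf_isPureDecomp ρ).exists_isMinOn hKne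
    ((continuousOn_ensembleAvg hcont).mono fun z hz => hz.sum_norm_sq_eq_one)
  obtain ⟨n, p, ψ, hn, hpos, hdec, havg⟩ := hzK.exists_pos h
  refine ⟨n, p, ψ, by simpa using hn, hpos, hdec, ensembleAvg_mem_pureDecompAvgs hpos hdec, ?_⟩
  rintro x hx
  obtain ⟨z', hz', rfl⟩ := hK x hx
  exact havg ▸ hmin hz'

end Attainment

theorem stmt19_general (d : ℕ)
    (h : Matrix (Fin d × Fin d) (Fin d × Fin d) ℂ → ℝ)
    (hcont : ContinuousOn h
      {A | ∃ ψ : Fin d × Fin d → ℂ, (∑ p, ‖ψ p‖ ^ 2 = 1) ∧ A = proj ψ})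
    (ρ : Matrix (Fin d × Fin d) (Fin d × Fin d) ℂ) (hρ : IsDensity ρ) :
    ∃ (n : ℕ) (p : Fin n → ℝ) (ψ : Fin n → (Fin d × Fin d → ℂ)),
      n ≤ d ^ 4 + 1 ∧ (∀ i, 0 < p i) ∧ (∑ i, p i = 1) ∧
      (∀ i, ∑ q, ‖ψ i q‖ ^ 2 = 1) ∧
      ρ = ∑ i, (p i : ℂ) • proj (ψ i) ∧
      (∑ i, p i * h (proj (ψ i)))
        = sInf {x : ℝ |
            ∃ (n' : ℕ) (p' : Fin n' → ℝ) (ψ' : Fin n' → (Fin d × Fin d → ℂ)),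
              (∀ i, 0 < p' i) ∧ (∑ i, p' i = 1) ∧
              (∀ i, ∑ q, ‖ψ' i q‖ ^ 2 = 1) ∧
              ρ = ∑ i, (p' i : ℂ) • proj (ψ' i) ∧
              x = ∑ i, p' i * h (proj (ψ' i))} := by
  obtain ⟨n, p, ψ, hn, hpos, ⟨-, hsum, hunit, hρψ⟩, hleast⟩ :=
    exists_isLeast_pureDecompAvgs hcont hρ
  refine ⟨n, p, ψ, ?_, hpos, hsum, hunit, hρψ, hleast.csInf_eq.symm⟩
  simpa [Fintype.card_prod, ← pow_mul, mul_pow, ← sq] using hn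

theorem stmt19 (d : ℕ) (hd : 0 < d)
    (h : Matrix (Fin d × Fin d) (Fin d × Fin d) ℂ → ℝ)
    (hcont : ContinuousOn h
      {A | ∃ ψ : Fin d × Fin d → ℂ, (∑ p, ‖ψ p‖ ^ 2 = 1) ∧ A = proj ψ})
    (ρ : Matrix (Fin d × Fin d) (Fin d × Fin d) ℂ) (hρ : IsDensity ρ) :
    ∃ (n : ℕ) (p : Fin n → ℝ) (ψ : Fin n → (Fin d × Fin d → ℂ)),
      n ≤ d ^ 4 + 1 ∧ (∀ i, 0 < p i) ∧ (∑ i, p i = 1) ∧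
      (∀ i, ∑ q, ‖ψ i q‖ ^ 2 = 1) ∧
      ρ = ∑ i, (p i : ℂ) • proj (ψ i) ∧
      (∑ i, p i * h (proj (ψ i)))
        = sInf {x : ℝ |
            ∃ (n' : ℕ) (p' : Fin n' → ℝ) (ψ' : Fin n' → (Fin d × Fin d → ℂ)),
              (∀ i, 0 < p' i) ∧ (∑ i, p' i = 1) ∧
              (∀ i, ∑ q, ‖ψ' i q‖ ^ 2 = 1) ∧
              ρ = ∑ i, (p' i : ℂ) • proj (ψ' i) ∧
              x = ∑ i, p' i * h (proj (ψ' i))} :=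
  stmt19_general d h hcont ρ hρ
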